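/- Alternating-sum identity across a cut: with J, I₁, I₂, X, σ and Φ as in the context, ∑_{C ⊆ X} (−1)^{|C|} · σ_C · Φ_{I₁∖C} = 0. -/

import Mathlib

open scoped Classical

/-- The weight assigned to an unordered pair `e = {i,j}`: `J (min i j) (max i j)`.
For symmetric `J` this is the common value `J i j = J j i`. -/
noncomputable def edgeWeight {N : ℕ} (J : Matrix (Fin N) (Fin N) ℝ) (e : Sym2 (Fin N)) : ℝ :=
  J e.inf e.sup

/-- `F` is a spanning forest (on all of `Fin N`, isolated vertices allowed) each of whose
connected components contains exactly one vertex not in `S`. -/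
def IsPhiForest {N : ℕ} (S : Finset (Fin N)) (F : Finset (Sym2 (Fin N))) : Prop :=
  (∀ e ∈ F, ¬ e.IsDiag) ∧
  (SimpleGraph.fromEdgeSet (↑F : Set (Sym2 (Fin N)))).IsAcyclic ∧
  ∀ c : (SimpleGraph.fromEdgeSet (↑F : Set (Sym2 (Fin N)))).ConnectedComponent,
    ∃! v : Fin N, v ∈ c.supp ∧ v ∉ S

/-- `Φ_S`: the sum over all spanning forests `F` each of whose components contains exactly
one vertex not in `S`, of the product of the weights `J_{ij}` of the edges of `F`. -/
noncomputable def Phi {N : ℕ} (J : Matrix (Fin N) (Fin N) ℝ) (S : Finset (Fin N)) : ℝ :=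
  ∑ F ∈ Finset.univ.filter (fun F : Finset (Sym2 (Fin N)) => IsPhiForest S F),
    ∏ e ∈ F, edgeWeight J e

/-- `J` is stable: negative semidefinite with kernel the span of the all-ones vector. -/
def IsStable {N : ℕ} (J : Matrix (Fin N) (Fin N) ℝ) : Prop :=
  (-J).PosSemidef ∧
  LinearMap.ker J.mulVecLin = Submodule.span ℝ {(fun _ => 1 : Fin N → ℝ)}

/-- The graph on `Fin N` with an edge `{i,j}` whenever `J i j > 0` (for `i ≠ j`). -/
def posGraph {N : ℕ} (J : Matrix (Fin N) (Fin N) ℝ) : SimpleGraph (Fin N) :=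
  SimpleGraph.fromRel fun i j => 0 < J i j

/-- The graph on `Fin N` with an edge `{i,j}` whenever `J i j ≠ 0` (for `i ≠ j`). -/
def supportGraph {N : ℕ} (J : Matrix (Fin N) (Fin N) ℝ) : SimpleGraph (Fin N) :=
  SimpleGraph.fromRel fun i j => J i j ≠ 0

/-- `σ_C = ∏_{i ∈ C} σ_i` where `σ_i = ∑_{j ∈ I₂} J i j` (and `σ_∅ = 1`). -/
noncomputable def sigmaProd {N : ℕ} (J : Matrix (Fin N) (Fin N) ℝ)
    (I₂ C : Finset (Fin N)) : ℝ :=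
  ∏ i ∈ C, ∑ j ∈ I₂, J i j

namespace AltCut
open SimpleGraph

variable {V : Type*}

lemma reach_decomp {G : SimpleGraph V} {a b : V} :
    ∀ {u v : V}, (G ⊔ SimpleGraph.edge a b).Walk u v →
    G.Reachable u v ∨ (G.Reachable u a ∧ G.Reachable b v) ∨
      (G.Reachable u b ∧ G.Reachable a v) := by
  intro u v w
  induction w with
  | nil => exact Or.inl (Reachable.refl _)
  | @cons u x v h p ih =>
    rcases h with h | h
    · rcases ih with h1 | ⟨h1, h2⟩ | ⟨h1, h2⟩
      · exact Or.inl (h.reachable.trans h1)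
      · exact Or.inr (Or.inl ⟨h.reachable.trans h1, h2⟩)
      · exact Or.inr (Or.inr ⟨h.reachable.trans h1, h2⟩)
    · rw [edge_adj] at h
      obtain ⟨(⟨rfl, rfl⟩ | ⟨rfl, rfl⟩), hne⟩ := h
      · rcases ih with h1 | ⟨h1, h2⟩ | ⟨h1, h2⟩
        · exact Or.inr (Or.inl ⟨Reachable.refl _, h1⟩)
        · exact Or.inl (h1.symm.trans h2)
        · exact Or.inl h2
      · rcases ih with h1 | ⟨h1, h2⟩ | ⟨h1, h2⟩
        · exact Or.inr (Or.inr ⟨Reachable.refl _, h1⟩)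
        · exact Or.inl h2
        · exact Or.inl (h1.symm.trans h2)

lemma reachable_sup_edge_iff {G : SimpleGraph V} {a b u v : V} :
    (G ⊔ SimpleGraph.edge a b).Reachable u v ↔
      G.Reachable u v ∨ (G.Reachable u a ∧ G.Reachable b v) ∨
        (G.Reachable u b ∧ G.Reachable a v) := by
  constructor
  · rintro ⟨w⟩; exact reach_decomp w
  · rintro (h | ⟨h1, h2⟩ | ⟨h1, h2⟩)
    · exact h.mono le_sup_left
    · by_cases hab : a = b
      · subst hab; exact ((h1.trans h2).mono le_sup_left)
      · have hadj : (G ⊔ SimpleGraph.edge a b).Adj a b :=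
          Or.inr ((edge_adj a b a b).2 ⟨Or.inl ⟨rfl, rfl⟩, hab⟩)
        exact (h1.mono le_sup_left).trans (hadj.reachable.trans (h2.mono le_sup_left))
    · by_cases hab : a = b
      · subst hab; exact ((h1.trans h2).mono le_sup_left)
      · have hadj : (G ⊔ SimpleGraph.edge a b).Adj b a :=
          Or.inr ((edge_adj a b b a).2 ⟨Or.inr ⟨rfl, rfl⟩, Ne.symm hab⟩)
        exact (h1.mono le_sup_left).trans (hadj.reachable.trans (h2.mono le_sup_left))

lemma isAcyclic_mono {G H : SimpleGraph V} (hle : H ≤ G) (h : G.IsAcyclic) : H.IsAcyclic :=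
  fun _ c hc => h (c.mapLe hle) (hc.mapLe hle)

lemma acyclic_sup_edge {G : SimpleGraph V} {a b : V} (hG : G.IsAcyclic)
    (hab : ¬ G.Reachable a b) : (G ⊔ SimpleGraph.edge a b).IsAcyclic := by
  rw [isAcyclic_iff_forall_adj_isBridge]
  intro v w hadj
  rw [isBridge_iff]
  rcases hadj with hGvw | he
  · intro hreach
    set K := G \ SimpleGraph.fromEdgeSet {s(v, w)} with hK
    have hle : (G ⊔ SimpleGraph.edge a b) \ SimpleGraph.fromEdgeSet {s(v, w)} ≤
        K ⊔ SimpleGraph.edge a b := by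
      intro x y hxy
      simp only [sdiff_adj, sup_adj, hK] at hxy ⊢
      tauto
    have hb : ¬ K.Reachable v w := isAcyclic_iff_forall_adj_isBridge.mp hG hGvw
    rcases reachable_sup_edge_iff.mp (hreach.mono hle) with h1 | ⟨h1, h2⟩ | ⟨h1, h2⟩
    · exact hb h1
    · exact hab (((h1.mono sdiff_le).symm).trans
        (hGvw.reachable.trans ((h2.mono sdiff_le).symm)))
    · exact hab ((h2.mono sdiff_le).trans
        (hGvw.symm.reachable.trans (h1.mono sdiff_le)))
  · rw [edge_adj] at he
    intro hreach
    have hsvw : s(v, w) = s(a, b) := by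
      rcases he.1 with ⟨rfl, rfl⟩ | ⟨rfl, rfl⟩
      · rfl
      · exact Sym2.eq_swap
    have hle : (G ⊔ SimpleGraph.edge a b) \ SimpleGraph.fromEdgeSet {s(v, w)} ≤ G := by
      intro x y hxy
      simp only [sdiff_adj, sup_adj, edge_adj, fromEdgeSet_adj, Set.mem_singleton_iff,
        hsvw, Sym2.eq_iff] at hxy
      tauto
    have : G.Reachable v w := hreach.mono hle
    rcases he.1 with ⟨rfl, rfl⟩ | ⟨rfl, rfl⟩
    · exact hab this
    · exact hab this.symm

/-- every vertex reaches a unique vertex outside `S`. -/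
def Rooted (G : SimpleGraph V) (S : Finset V) : Prop :=
  ∀ u, ∃! r, (G.Reachable u r ∧ r ∉ S)

lemma Rooted.key {G : SimpleGraph V} {S : Finset V} (h : Rooted G S) {u x y : V}
    (hx : G.Reachable u x) (hx' : x ∉ S) (hy : G.Reachable u y) (hy' : y ∉ S) : x = y := by
  obtain ⟨r, _, hr⟩ := h u
  rw [hr x ⟨hx, hx'⟩, hr y ⟨hy, hy'⟩]

lemma rooted_sup_edge [DecidableEq V] {G : SimpleGraph V} {S : Finset V} {a b : V}
    (hG : Rooted G S) (haS : a ∉ S) (hbS : b ∉ S) (hab : ¬ G.Reachable a b) :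
    Rooted (G ⊔ SimpleGraph.edge a b) (insert a S) := by
  intro u
  by_cases hua : G.Reachable u a
  · obtain ⟨rb, ⟨hrb, hrbS⟩, _⟩ := hG b
    have hrba : rb ≠ a := by
      rintro rfl
      exact hab hrb.symm
    refine ⟨rb, ⟨reachable_sup_edge_iff.mpr (Or.inr (Or.inl ⟨hua, hrb⟩)),
      by simp [Finset.mem_insert, hrba, hrbS]⟩, ?_⟩
    rintro v ⟨hv, hvS⟩
    rw [Finset.mem_insert] at hvS
    push_neg at hvS
    rcases reachable_sup_edge_iff.mp hv with h1 | ⟨h1, h2⟩ | ⟨h1, h2⟩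
    · exact absurd (hG.key h1 hvS.2 hua haS) hvS.1
    · exact hG.key h2 hvS.2 hrb hrbS
    · exact absurd (hua.symm.trans h1) hab
  · obtain ⟨ρ, ⟨hρ, hρS⟩, _⟩ := hG u
    have hρa : ρ ≠ a := by rintro rfl; exact hua hρ
    refine ⟨ρ, ⟨hρ.mono le_sup_left, by simp [Finset.mem_insert, hρa, hρS]⟩, ?_⟩
    rintro v ⟨hv, hvS⟩
    rw [Finset.mem_insert] at hvS
    push_neg at hvS
    rcases reachable_sup_edge_iff.mp hv with h1 | ⟨h1, h2⟩ | ⟨h1, h2⟩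
    · exact hG.key h1 hvS.2 hρ hρS
    · exact absurd h1 hua
    · exact absurd (hG.key h2 hvS.2 (Reachable.refl a) haS) hvS.1

lemma rooted_of_sup_edge [DecidableEq V] {G : SimpleGraph V} {S : Finset V} {a b : V}
    (hG' : Rooted (G ⊔ SimpleGraph.edge a b) (insert a S)) (haS : a ∉ S) (hbS : b ∉ S)
    (hne : a ≠ b) (hab : ¬ G.Reachable a b) : Rooted G S := by
  have hbaS : b ∉ insert a S := by simp [Finset.mem_insert, (Ne.symm hne), hbS]
  have hadj : (G ⊔ SimpleGraph.edge a b).Reachable a b :=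
    reachable_sup_edge_iff.mpr (Or.inr (Or.inl ⟨Reachable.refl a, Reachable.refl b⟩))
  have claimA : ∀ v, G.Reachable a v → v ∉ S → v = a := by
    intro v hv hvS
    by_contra hva
    have hvaS : v ∉ insert a S := by simp [Finset.mem_insert, hva, hvS]
    obtain ⟨r', _, hr'⟩ := hG' a
    have h1 : v = r' := hr' v ⟨hv.mono le_sup_left, hvaS⟩
    have h2 : b = r' := hr' b ⟨hadj, hbaS⟩
    rw [h1, ← h2] at hv
    exact hab hv
  intro u
  by_cases hua : G.Reachable u a
  · refine ⟨a, ⟨hua, haS⟩, ?_⟩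
    rintro v ⟨hv, hvS⟩
    exact claimA v (hua.symm.trans hv) hvS
  · obtain ⟨ρ', ⟨hρ', hρ'S⟩, huniq'⟩ := hG' u
    rw [Finset.mem_insert] at hρ'S
    push_neg at hρ'S
    have hGρ' : G.Reachable u ρ' := by
      rcases reachable_sup_edge_iff.mp hρ' with h1 | ⟨h1, h2⟩ | ⟨h1, h2⟩
      · exact h1
      · exact absurd h1 hua
      · exact absurd (claimA ρ' h2 hρ'S.2) hρ'S.1
    refine ⟨ρ', ⟨hGρ', hρ'S.2⟩, ?_⟩
    rintro v ⟨hv, hvS⟩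
    have hva : v ≠ a := by rintro rfl; exact hua hv
    exact huniq' v ⟨hv.mono le_sup_left, by simp [Finset.mem_insert, hva, hvS]⟩

variable {N : ℕ}

/-- the graph of a finite edge set -/
abbrev gr (F : Finset (Sym2 (Fin N))) : SimpleGraph (Fin N) :=
  SimpleGraph.fromEdgeSet (↑F : Set (Sym2 (Fin N)))

lemma isPhiForest_iff (S : Finset (Fin N)) (F : Finset (Sym2 (Fin N))) :
    IsPhiForest S F ↔
      (∀ e ∈ F, ¬ e.IsDiag) ∧ (gr F).IsAcyclic ∧ Rooted (gr F) S := by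
  refine and_congr_right fun _ => and_congr_right fun _ => ?_
  constructor
  · intro h u
    obtain ⟨v, ⟨hv, hvS⟩, huniq⟩ := h ((gr F).connectedComponentMk u)
    rw [ConnectedComponent.mem_supp_iff, ConnectedComponent.eq] at hv
    refine ⟨v, ⟨hv.symm, hvS⟩, ?_⟩
    rintro y ⟨hy, hyS⟩
    exact huniq y ⟨by rw [ConnectedComponent.mem_supp_iff, ConnectedComponent.eq]; exact hy.symm, hyS⟩
  · intro h c
    induction c using SimpleGraph.ConnectedComponent.ind with | _ u => ?_
    obtain ⟨r, ⟨hr, hrS⟩, huniq⟩ := h u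
    refine ⟨r, ⟨by rw [ConnectedComponent.mem_supp_iff, ConnectedComponent.eq]; exact hr.symm, hrS⟩, ?_⟩
    rintro y ⟨hy, hyS⟩
    rw [ConnectedComponent.mem_supp_iff, ConnectedComponent.eq] at hy
    exact huniq y ⟨hy.symm, hyS⟩

lemma edgeWeight_mk {J : Matrix (Fin N) (Fin N) ℝ} (hsym : J.IsSymm) (i j : Fin N) :
    edgeWeight J s(i, j) = J i j := by
  unfold edgeWeight
  rw [Sym2.inf_mk, Sym2.sup_mk]
  rcases le_total i j with h | h
  · rw [inf_eq_left.mpr h, sup_eq_right.mpr h]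
  · rw [inf_eq_right.mpr h, sup_eq_left.mpr h]
    exact hsym.apply i j

lemma gr_insert {F : Finset (Sym2 (Fin N))} {a b : Fin N} :
    gr (insert s(a, b) F) = gr F ⊔ SimpleGraph.edge a b := by
  rw [gr, Finset.coe_insert]
  ext x y
  simp only [fromEdgeSet_adj, Set.mem_insert_iff, sup_adj, edge_adj, Sym2.eq_iff]
  tauto

lemma gr_le_of_subset {F F' : Finset (Sym2 (Fin N))} (h : F ⊆ F') : gr F ≤ gr F' :=
  SimpleGraph.fromEdgeSet_mono (by exact_mod_cast h)

lemma not_reachable_of_erase {F' : Finset (Sym2 (Fin N))} {a b : Fin N}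
    (hacyc : (gr F').IsAcyclic) (hmem : s(a, b) ∈ F') (hne : a ≠ b) :
    ¬ (gr (F'.erase s(a, b))).Reachable a b := by
  have hadj : (gr F').Adj a b := by
    rw [fromEdgeSet_adj]
    exact ⟨by exact_mod_cast hmem, hne⟩
  have hbr : ¬ (gr F' \ fromEdgeSet {s(a, b)}).Reachable a b :=
    isAcyclic_iff_forall_adj_isBridge.mp hacyc hadj
  intro hreach
  refine hbr (hreach.mono ?_)
  intro x y hxy
  rw [fromEdgeSet_adj] at hxy
  obtain ⟨hmem', hnexy⟩ := hxy
  rw [Finset.mem_coe, Finset.mem_erase] at hmem'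
  rw [sdiff_adj, fromEdgeSet_adj]
  exact ⟨⟨by exact_mod_cast hmem'.2, hnexy⟩, by simp [fromEdgeSet_adj, hmem'.1]⟩

/-- the condition that every vertex of `E` has an `F`-edge into `I₂`. -/
def P (I₂ E : Finset (Fin N)) (F : Finset (Sym2 (Fin N))) : Prop :=
  ∀ b ∈ E, ∃ j ∈ I₂, s(b, j) ∈ F

noncomputable def W (J : Matrix (Fin N) (Fin N) ℝ) (F : Finset (Sym2 (Fin N))) : ℝ :=
  ∏ e ∈ F, edgeWeight J e

noncomputable def chJ (I₂ : Finset (Fin N)) (a : Fin N) (F' : Finset (Sym2 (Fin N))) : Fin N :=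
  if h : ∃ j, j ∈ I₂ ∧ s(a, j) ∈ F' then h.choose else a

lemma chJ_spec {I₂ : Finset (Fin N)} {a : Fin N} {F' : Finset (Sym2 (Fin N))}
    (h : ∃ j, j ∈ I₂ ∧ s(a, j) ∈ F') : chJ I₂ a F' ∈ I₂ ∧ s(a, chJ I₂ a F') ∈ F' := by
  rw [chJ, dif_pos h]
  exact h.choose_spec

lemma adj_of_mem {F : Finset (Sym2 (Fin N))} {x y : Fin N} (h : s(x, y) ∈ F) (hne : x ≠ y) :
    (gr F).Adj x y := by
  rw [SimpleGraph.fromEdgeSet_adj]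
  exact ⟨by exact_mod_cast h, hne⟩

lemma keystep (J : Matrix (Fin N) (Fin N) ℝ) (hsym : J.IsSymm) (I₂ : Finset (Fin N))
    (a : Fin N) (S E : Finset (Fin N))
    (haS : a ∉ S) (ha2 : a ∉ I₂) (hS2 : ∀ x ∈ S, x ∉ I₂) (haE : a ∉ E) :
    ((∑ j ∈ I₂, J a j) *
      ∑ F ∈ Finset.univ.filter (fun F => IsPhiForest S F ∧ P I₂ E F), W J F) =
    ∑ F' ∈ Finset.univ.filter
        (fun F' => IsPhiForest (insert a S) F' ∧ P I₂ (insert a E) F'), W J F' := by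
  rw [Finset.sum_mul_sum, ← Finset.sum_product']
  refine Finset.sum_nbij' (fun p => insert s(a, p.1) p.2)
    (fun F' => (chJ I₂ a F', F'.erase s(a, chJ I₂ a F'))) ?_ ?_ ?_ ?_ ?_
  · -- forward membership
    rintro ⟨j₀, F⟩ hp
    dsimp only
    rw [Finset.mem_product] at hp
    obtain ⟨hj₀, hF⟩ := hp
    rw [Finset.mem_filter] at hF
    obtain ⟨-, hPhi, hP⟩ := hF
    obtain ⟨hdiag, hacyc, hroot⟩ := (isPhiForest_iff S F).mp hPhi
    have hnaj : a ≠ j₀ := fun h => ha2 (h ▸ hj₀)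
    have hj₀S : j₀ ∉ S := fun h => hS2 _ h hj₀
    have hnr : ¬ (gr F).Reachable a j₀ := fun h =>
      hnaj (hroot.key (SimpleGraph.Reachable.refl a) haS h hj₀S)
    rw [Finset.mem_filter]
    refine ⟨Finset.mem_univ _, ?_, ?_⟩
    · rw [isPhiForest_iff]
      refine ⟨?_, ?_, ?_⟩
      · intro e he
        rcases Finset.mem_insert.mp he with rfl | he
        · rw [Sym2.isDiag_iff_proj_eq]; exact hnaj
        · exact hdiag e he
      · rw [gr_insert]; exact acyclic_sup_edge hacyc hnr
      · rw [gr_insert]; exact rooted_sup_edge hroot haS hj₀S hnr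
    · intro b hb
      rcases Finset.mem_insert.mp hb with rfl | hb
      · exact ⟨j₀, hj₀, Finset.mem_insert_self _ _⟩
      · obtain ⟨j', hj', hm⟩ := hP b hb
        exact ⟨j', hj', Finset.mem_insert_of_mem hm⟩
  · -- backward membership
    intro F' hF'
    rw [Finset.mem_filter] at hF'
    obtain ⟨-, hPhi', hP'⟩ := hF'
    have hex : ∃ j, j ∈ I₂ ∧ s(a, j) ∈ F' := by
      obtain ⟨j, hj, hm⟩ := hP' a (Finset.mem_insert_self _ _)
      exact ⟨j, hj, hm⟩
    obtain ⟨hc2, hcm⟩ := chJ_spec hex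
    set c := chJ I₂ a F' with hcdef
    have hnac : a ≠ c := fun h => ha2 (h ▸ hc2)
    have hcS : c ∉ S := fun h => hS2 _ h hc2
    obtain ⟨hdiag', hacyc', hroot'⟩ := (isPhiForest_iff _ F').mp hPhi'
    have hie : insert s(a, c) (F'.erase s(a, c)) = F' := Finset.insert_erase hcm
    have hnr' : ¬ (gr (F'.erase s(a, c))).Reachable a c :=
      not_reachable_of_erase hacyc' hcm hnac
    have ggr' : gr F' = gr (F'.erase s(a, c)) ⊔ SimpleGraph.edge a c := by
      conv_lhs => rw [← hie]
      exact gr_insert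
    rw [Finset.mem_product, Finset.mem_filter]
    refine ⟨hc2, Finset.mem_univ _, ?_, ?_⟩
    · rw [isPhiForest_iff]
      refine ⟨fun e he => hdiag' e (Finset.mem_of_mem_erase he),
        isAcyclic_mono (gr_le_of_subset (Finset.erase_subset _ _)) hacyc', ?_⟩
      rw [ggr'] at hroot'
      exact rooted_of_sup_edge hroot' haS hcS hnac hnr'
    · intro b hb
      have hba : b ≠ a := fun h => haE (h ▸ hb)
      obtain ⟨j', hj', hm⟩ := hP' b (Finset.mem_insert_of_mem hb)
      refine ⟨j', hj', Finset.mem_erase.mpr ⟨?_, hm⟩⟩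
      intro he
      rw [Sym2.eq_iff] at he
      rcases he with ⟨rfl, rfl⟩ | ⟨rfl, rfl⟩
      · exact hba rfl
      · exact ha2 hj'
  · -- left inverse
    rintro ⟨j₀, F⟩ hp
    dsimp only
    rw [Finset.mem_product] at hp
    obtain ⟨hj₀, hF⟩ := hp
    rw [Finset.mem_filter] at hF
    obtain ⟨-, hPhi, hP⟩ := hF
    obtain ⟨hdiag, hacyc, hroot⟩ := (isPhiForest_iff S F).mp hPhi
    have hnaj : a ≠ j₀ := fun h => ha2 (h ▸ hj₀)
    have hj₀S : j₀ ∉ S := fun h => hS2 _ h hj₀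
    have hnotmem : s(a, j₀) ∉ F := by
      intro hm
      exact hnaj (hroot.key (SimpleGraph.Reachable.refl a) haS
        (adj_of_mem hm hnaj).reachable hj₀S)
    have huniq : ∀ j', j' ∈ I₂ ∧ s(a, j') ∈ insert s(a, j₀) F → j' = j₀ := by
      rintro j' ⟨hj', hm⟩
      have hnaj' : a ≠ j' := fun h => ha2 (h ▸ hj')
      rcases Finset.mem_insert.mp hm with he | hm
      · rw [Sym2.eq_iff] at he
        rcases he with ⟨-, h⟩ | ⟨h, -⟩
        · exact h
        · exact absurd h hnaj
      · have hj'S : j' ∉ S := fun h => hS2 _ h hj'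
        exact absurd (hroot.key (adj_of_mem hm hnaj').reachable hj'S
          (SimpleGraph.Reachable.refl a) haS) (Ne.symm hnaj')
    have hch : chJ I₂ a (insert s(a, j₀) F) = j₀ := by
      have hex : ∃ j, j ∈ I₂ ∧ s(a, j) ∈ insert s(a, j₀) F :=
        ⟨j₀, hj₀, Finset.mem_insert_self _ _⟩
      exact huniq _ (chJ_spec hex)
    rw [hch, Finset.erase_insert hnotmem]
  · -- right inverse
    intro F' hF'
    dsimp only
    rw [Finset.mem_filter] at hF'
    obtain ⟨-, hPhi', hP'⟩ := hF'
    have hex : ∃ j, j ∈ I₂ ∧ s(a, j) ∈ F' := by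
      obtain ⟨j, hj, hm⟩ := hP' a (Finset.mem_insert_self _ _)
      exact ⟨j, hj, hm⟩
    exact Finset.insert_erase (chJ_spec hex).2
  · -- weights
    rintro ⟨j₀, F⟩ hp
    dsimp only
    rw [Finset.mem_product] at hp
    obtain ⟨hj₀, hF⟩ := hp
    rw [Finset.mem_filter] at hF
    obtain ⟨-, hPhi, hP⟩ := hF
    obtain ⟨hdiag, hacyc, hroot⟩ := (isPhiForest_iff S F).mp hPhi
    have hnaj : a ≠ j₀ := fun h => ha2 (h ▸ hj₀)
    have hj₀S : j₀ ∉ S := fun h => hS2 _ h hj₀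
    have hnotmem : s(a, j₀) ∉ F := by
      intro hm
      exact hnaj (hroot.key (SimpleGraph.Reachable.refl a) haS
        (adj_of_mem hm hnaj).reachable hj₀S)
    simp only [W]
    rw [Finset.prod_insert hnotmem, edgeWeight_mk hsym]

lemma keyphi (J : Matrix (Fin N) (Fin N) ℝ) (hsym : J.IsSymm)
    (I₁ I₂ : Finset (Fin N)) (hdisj : Disjoint I₁ I₂) (C : Finset (Fin N)) :
    C ⊆ I₁ → ∀ S E : Finset (Fin N), (∀ x ∈ S, x ∉ I₂) → (∀ x ∈ C, x ∉ S) →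
      (∀ x ∈ C, x ∉ E) →
    ((∏ i ∈ C, ∑ j ∈ I₂, J i j) *
      ∑ F ∈ Finset.univ.filter (fun F => IsPhiForest S F ∧ P I₂ E F), W J F) =
    ∑ F' ∈ Finset.univ.filter
        (fun F' => IsPhiForest (S ∪ C) F' ∧ P I₂ (E ∪ C) F'), W J F' := by
  induction C using Finset.induction_on with
  | empty =>
    intro _ S E _ _ _
    simp
  | @insert a C₀ ha ih =>
    intro hC1 S E hS2 hCS hCE
    have haI₁ : a ∈ I₁ := hC1 (Finset.mem_insert_self _ _)
    have ha2 : a ∉ I₂ := Finset.disjoint_left.mp hdisj haI₁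
    have haS : a ∉ S := hCS a (Finset.mem_insert_self _ _)
    have haE : a ∉ E := hCE a (Finset.mem_insert_self _ _)
    rw [Finset.prod_insert ha, mul_assoc, mul_left_comm,
      keystep J hsym I₂ a S E haS ha2 hS2 haE,
      ih (fun x hx => hC1 (Finset.mem_insert_of_mem hx)) (insert a S) (insert a E)
        (fun x hx => by
          rcases Finset.mem_insert.mp hx with rfl | hx
          · exact ha2
          · exact hS2 x hx)
        (fun x hx => by
          intro hmem
          rcases Finset.mem_insert.mp hmem with rfl | hmem
          · exact ha hx
          · exact hCS x (Finset.mem_insert_of_mem hx) hmem)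
        (fun x hx => by
          intro hmem
          rcases Finset.mem_insert.mp hmem with rfl | hmem
          · exact ha hx
          · exact hCE x (Finset.mem_insert_of_mem hx) hmem)]
    simp only [Finset.insert_union, ← Finset.union_insert]

lemma cross_of_walk (I₁ I₂ : Finset (Fin N)) (hcover : I₁ ∪ I₂ = Finset.univ)
    {F : Finset (Sym2 (Fin N))} :
    ∀ {v r : Fin N}, (gr F).Walk v r → r ∉ I₁ → v ∈ I₁ →
      ∃ b ∈ I₁, ∃ j ∈ I₂, s(b, j) ∈ F := by
  intro v r w
  induction w with
  | nil => intro hr hv; exact absurd hv hr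
  | @cons u x _ h p ih =>
    intro hr hu
    by_cases hx : x ∈ I₁
    · exact ih hr hx
    · have hx2 : x ∈ I₂ := by
        have hmem : x ∈ I₁ ∪ I₂ := by rw [hcover]; exact Finset.mem_univ x
        rcases Finset.mem_union.mp hmem with h' | h'
        · exact absurd h' hx
        · exact h'
      rw [SimpleGraph.fromEdgeSet_adj] at h
      exact ⟨u, hu, x, hx2, by exact_mod_cast h.1⟩

end AltCut

/-- **Alternating-sum identity across a cut.**  With `V = I₁ ⊔ I₂` and `X` the set of
boundary vertices of `I₁`, one has `∑_{C ⊆ X} (-1)^{|C|} σ_C Φ_{I₁ ∖ C} = 0`. -/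
theorem alternating_sum_across_cut (N : ℕ) (J : Matrix (Fin N) (Fin N) ℝ)
    (hsym : J.IsSymm)
    (I₁ I₂ : Finset (Fin N)) (h1 : I₁.Nonempty) (h2 : I₂.Nonempty)
    (hdisj : Disjoint I₁ I₂) (hcover : I₁ ∪ I₂ = Finset.univ)
    (X : Finset (Fin N)) (hX : X = I₁.filter fun i => ∃ j ∈ I₂, J i j ≠ 0) :
    ∑ C ∈ X.powerset, (-1 : ℝ) ^ C.card * sigmaProd J I₂ C * Phi J (I₁ \ C) = 0 := by
  have hXI : X ⊆ I₁ := by rw [hX]; exact Finset.filter_subset _ _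
  have hzero : ∀ C ∈ I₁.powerset, C ∉ X.powerset →
      (-1 : ℝ) ^ C.card * sigmaProd J I₂ C * Phi J (I₁ \ C) = 0 := by
    intro C hC hCX
    rw [Finset.mem_powerset] at hC
    rw [Finset.mem_powerset] at hCX
    obtain ⟨i, hiC, hiX⟩ := Finset.not_subset.mp hCX
    have hiI : i ∈ I₁ := hC hiC
    have hzi : ∀ j ∈ I₂, J i j = 0 := by
      intro j hj
      by_contra hne
      exact hiX (by rw [hX, Finset.mem_filter]; exact ⟨hiI, j, hj, hne⟩)
    have hs : sigmaProd J I₂ C = 0 :=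
      Finset.prod_eq_zero hiC (Finset.sum_eq_zero hzi)
    rw [hs, mul_zero, zero_mul]
  rw [Finset.sum_subset (Finset.powerset_mono.mpr hXI) hzero]
  have hterm : ∀ C ∈ I₁.powerset,
      (-1 : ℝ) ^ C.card * sigmaProd J I₂ C * Phi J (I₁ \ C) =
      ∑ F ∈ Finset.univ.filter (fun F => IsPhiForest I₁ F),
        (if AltCut.P I₂ C F then (-1 : ℝ) ^ C.card * AltCut.W J F else 0) := by
    intro C hC
    rw [Finset.mem_powerset] at hC
    have hPhi : Phi J (I₁ \ C) =
        ∑ F ∈ Finset.univ.filter (fun F => IsPhiForest (I₁ \ C) F ∧ AltCut.P I₂ ∅ F),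
          AltCut.W J F := by
      unfold Phi AltCut.W
      congr 1
      apply Finset.filter_congr
      intro F _
      simp [AltCut.P]
    unfold sigmaProd
    rw [mul_assoc, hPhi, AltCut.keyphi J hsym I₁ I₂ hdisj C hC (I₁ \ C) ∅
      (fun x hx => Finset.disjoint_left.mp hdisj (Finset.mem_sdiff.mp hx).1)
      (fun x hx => by simp [Finset.mem_sdiff, hx])
      (fun x _ => Finset.notMem_empty x),
      Finset.sdiff_union_of_subset hC, Finset.empty_union,
      ← Finset.filter_filter, Finset.sum_filter, Finset.mul_sum]
    exact Finset.sum_congr rfl (fun F _ => by rw [mul_ite, mul_zero])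
  rw [Finset.sum_congr rfl hterm, Finset.sum_comm]
  refine Finset.sum_eq_zero ?_
  intro F hF
  rw [Finset.mem_filter] at hF
  obtain ⟨-, hPhiF⟩ := hF
  set Y := I₁.filter (fun b => ∃ j ∈ I₂, s(b, j) ∈ F) with hY
  have hYI : Y ⊆ I₁ := Finset.filter_subset _ _
  have hYne : Y.Nonempty := by
    obtain ⟨v, hv⟩ := h1
    have hroot := ((AltCut.isPhiForest_iff I₁ F).mp hPhiF).2.2
    obtain ⟨r, ⟨hr, hrI⟩, -⟩ := hroot v
    obtain ⟨w⟩ := hr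
    obtain ⟨b, hb, j, hj, hm⟩ := AltCut.cross_of_walk I₁ I₂ hcover w hrI hv
    exact ⟨b, by rw [hY, Finset.mem_filter]; exact ⟨hb, j, hj, hm⟩⟩
  have hcong : ∀ C ∈ I₁.powerset,
      (if AltCut.P I₂ C F then (-1 : ℝ) ^ C.card * AltCut.W J F else 0) =
      (if C ∈ Y.powerset then (-1 : ℝ) ^ C.card * AltCut.W J F else 0) := by
    intro C hC
    rw [Finset.mem_powerset] at hC
    have hiff : AltCut.P I₂ C F ↔ C ∈ Y.powerset := by
      rw [Finset.mem_powerset]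
      constructor
      · intro h b hb
        obtain ⟨j, hj, hm⟩ := h b hb
        rw [hY, Finset.mem_filter]
        exact ⟨hC hb, j, hj, hm⟩
      · intro h b hb
        have hmem := h hb
        rw [hY, Finset.mem_filter] at hmem
        exact hmem.2
    rw [if_congr hiff rfl rfl]
  rw [Finset.sum_congr rfl hcong, Finset.sum_ite_mem,
    Finset.inter_eq_right.mpr (Finset.powerset_mono.mpr hYI), ← Finset.sum_mul]
  have hz : (∑ C ∈ Y.powerset, (-1 : ℝ) ^ C.card) = 0 := by
    have hint := Finset.sum_powerset_neg_one_pow_card_of_nonempty hYne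
    exact_mod_cast congrArg (fun z : ℤ => (z : ℝ)) hint
  rw [hz, zero_mul]
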